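/- Let n ≥ 1, let (r₁,…,r_ℓ) be a composition of n, and let w = w_{r₁,…,r_ℓ} be the associated relevant Weyl element. Then a real n×n upper-triangular unipotent matrix u satisfies that w·u·w⁻¹ is upper triangular if and only if u is block diagonal with diagonal blocks of sizes r_ℓ, r_{ℓ−1}, …, r₁ (in that order from top-left to bottom-right), each diagonal block being upper-triangular unipotent; in that case w·u·w⁻¹ is block diagonal with upper-triangular unipotent diagonal blocks of sizes r₁, r₂, …, r_ℓ. -/
import Mathlib


/-- Partial sums `r̂_i = r₁ + ⋯ + r_i` of a composition (1-based indexing). -/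
def rhat (r : ℕ → ℕ) (i : ℕ) : ℕ := ∑ j ∈ Finset.Icc 1 i, r j

/-- The relevant Weyl element `w_{r₁,…,r_ℓ}`: the `n×n` permutation matrix built of
identity blocks `I_{r₁},…,I_{r_ℓ}` along the anti-diagonal, with `I_{r₁}` in the
top-right corner and `I_{r_ℓ}` in the bottom-left corner. -/
noncomputable def relevantWeyl (n ℓ : ℕ) (r : ℕ → ℕ) : Matrix (Fin n) (Fin n) ℝ :=
  open scoped Classical in
  Matrix.of fun a b =>
    if ∃ i ∈ Finset.Icc 1 ℓ, rhat r (i - 1) ≤ (a : ℕ) ∧ (a : ℕ) < rhat r i ∧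
        (b : ℕ) = ((a : ℕ) - rhat r (i - 1)) + (n - rhat r i) then 1 else 0


lemma rhat_zero (r : ℕ → ℕ) : rhat r 0 = 0 := by simp [rhat]

lemma rhat_mono (r : ℕ → ℕ) : Monotone (rhat r) := fun i j h =>
  Finset.sum_le_sum_of_subset (Finset.Icc_subset_Icc_right h)

noncomputable def bidx (r : ℕ → ℕ) (a : ℕ) : ℕ := sInf {i | a < rhat r i}

noncomputable def sfun (n : ℕ) (r : ℕ → ℕ) (a : ℕ) : ℕ :=
  a - rhat r (bidx r a - 1) + (n - rhat r (bidx r a))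

lemma bidx_spec {n ℓ : ℕ} {r : ℕ → ℕ} (hsum : rhat r ℓ = n) {a : ℕ} (ha : a < n) :
    1 ≤ bidx r a ∧ bidx r a ≤ ℓ ∧ rhat r (bidx r a - 1) ≤ a ∧ a < rhat r (bidx r a) := by
  have hmem : ℓ ∈ {i | a < rhat r i} := by simp only [Set.mem_setOf_eq, hsum]; exact ha
  have h1 : a < rhat r (bidx r a) := Nat.sInf_mem ⟨ℓ, hmem⟩
  have h2 : bidx r a ≤ ℓ := Nat.sInf_le hmem
  have h3 : 1 ≤ bidx r a := by
    rcases Nat.eq_zero_or_pos (bidx r a) with h | h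
    · have h0 : bidx r a = 0 := h
      rw [h0] at h1; simp [rhat_zero] at h1
    · exact h
  have h4 : rhat r (bidx r a - 1) ≤ a := by
    have h5 : bidx r a - 1 ∉ {i | a < rhat r i} :=
      Nat.notMem_of_lt_sInf (show bidx r a - 1 < sInf {i | a < rhat r i} by
        change bidx r a - 1 < bidx r a; omega)
    simp only [Set.mem_setOf_eq, not_lt] at h5
    exact h5
  exact ⟨h3, h2, h4, h1⟩

lemma block_unique {r : ℕ → ℕ} {i j a : ℕ} (hi : 1 ≤ i) (hj : 1 ≤ j)
    (h1 : rhat r (i-1) ≤ a) (h2 : a < rhat r i) (h3 : rhat r (j-1) ≤ a) (h4 : a < rhat r j) :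
    i = j := by
  rcases lt_trichotomy i j with h | h | h
  · have := rhat_mono r (show i ≤ j - 1 by omega); omega
  · exact h
  · have := rhat_mono r (show j ≤ i - 1 by omega); omega

lemma mirror_unique {n : ℕ} {r : ℕ → ℕ} {i j b : ℕ} (hi : 1 ≤ i) (hj : 1 ≤ j)
    (h1 : n - rhat r i ≤ b) (h2 : b < n - rhat r (i-1))
    (h3 : n - rhat r j ≤ b) (h4 : b < n - rhat r (j-1)) : i = j := by
  rcases lt_trichotomy i j with h | h | h
  · have h5 : n - rhat r (j-1) ≤ n - rhat r i :=
      Nat.sub_le_sub_left (rhat_mono r (show i ≤ j - 1 by omega)) n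
    omega
  · exact h
  · have h5 : n - rhat r (i-1) ≤ n - rhat r j :=
      Nat.sub_le_sub_left (rhat_mono r (show j ≤ i - 1 by omega)) n
    omega

lemma sfun_mirror {n ℓ : ℕ} {r : ℕ → ℕ} (hsum : rhat r ℓ = n) {a : ℕ} (ha : a < n) :
    n - rhat r (bidx r a) ≤ sfun n r a ∧ sfun n r a < n - rhat r (bidx r a - 1) := by
  obtain ⟨h1, h2, h3, h4⟩ := bidx_spec hsum ha
  have h5 : rhat r (bidx r a) ≤ n := hsum ▸ rhat_mono r h2
  have h6 : rhat r (bidx r a - 1) ≤ rhat r (bidx r a) := rhat_mono r (by omega)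
  rw [sfun]
  omega

lemma sfun_lt {n ℓ : ℕ} {r : ℕ → ℕ} (hsum : rhat r ℓ = n) {a : ℕ} (ha : a < n) :
    sfun n r a < n := by
  have := (sfun_mirror hsum ha).2; omega

lemma sfun_inj {n ℓ : ℕ} {r : ℕ → ℕ} (hsum : rhat r ℓ = n) {a b : ℕ} (ha : a < n)
    (hb : b < n) (h : sfun n r a = sfun n r b) : a = b := by
  obtain ⟨ha1, ha2, ha3, ha4⟩ := bidx_spec hsum ha
  obtain ⟨hb1, hb2, hb3, hb4⟩ := bidx_spec hsum hb
  obtain ⟨ma1, ma2⟩ := sfun_mirror hsum ha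
  obtain ⟨mb1, mb2⟩ := sfun_mirror hsum hb
  have heq : bidx r a = bidx r b :=
    mirror_unique ha1 hb1 ma1 ma2 (h ▸ mb1) (h ▸ mb2)
  rw [sfun, sfun, heq] at h
  have h5 : rhat r (bidx r b) ≤ n := hsum ▸ rhat_mono r hb2
  have h6 : rhat r (bidx r b - 1) ≤ rhat r (bidx r b) := rhat_mono r (by omega)
  rw [heq] at ha3 ha4
  omega
lemma weyl_apply {n ℓ : ℕ} {r : ℕ → ℕ} (hsum : rhat r ℓ = n) (a b : Fin n) :
    relevantWeyl n ℓ r a b = if (b : ℕ) = sfun n r (a : ℕ) then 1 else 0 := by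
  obtain ⟨h1, h2, h3, h4⟩ := bidx_spec hsum a.isLt
  by_cases h : (b : ℕ) = sfun n r (a : ℕ)
  · rw [if_pos h, relevantWeyl, Matrix.of_apply, if_pos]
    exact ⟨bidx r (a : ℕ), Finset.mem_Icc.mpr ⟨h1, h2⟩, h3, h4, h⟩
  · rw [if_neg h, relevantWeyl, Matrix.of_apply, if_neg]
    rintro ⟨i, hi, hb1, hb2, hb3⟩
    rw [Finset.mem_Icc] at hi
    have : i = bidx r (a : ℕ) := block_unique hi.1 h1 hb1 hb2 h3 h4
    exact h (by rw [hb3, this]; rfl)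


/-- Let `(r₁,…,r_ℓ)` be a composition of `n` and `w` the associated
relevant Weyl element, and let `u` be upper-triangular unipotent.  Then `w·u·w⁻¹` is
upper triangular **iff** `u` is block diagonal with diagonal blocks of sizes
`r_ℓ, r_{ℓ−1}, …, r₁` from top-left to bottom-right (the block for `i ∈ {1,…,ℓ}`
occupying rows and columns `[n−r̂_i, n−r̂_{i−1})`, 0-based); each diagonal block of
`u` is automatically upper-triangular unipotent.  In that case `w·u·w⁻¹` is block
diagonal with upper-triangular unipotent diagonal blocks of sizes `r₁,…,r_ℓ`
(the block for `i` occupying rows and columns `[r̂_{i−1}, r̂_i)`). -/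
theorem stmt_19 (n : ℕ) (hn : 1 ≤ n) (ℓ : ℕ) (r : ℕ → ℕ) (hℓ : 1 ≤ ℓ)
    (hr : ∀ i ∈ Finset.Icc 1 ℓ, 1 ≤ r i) (hsum : rhat r ℓ = n)
    (u : Matrix (Fin n) (Fin n) ℝ)
    (hu_upper : ∀ i j : Fin n, j < i → u i j = 0)
    (hu_diag : ∀ i : Fin n, u i i = 1) :
    ((∀ i j : Fin n, j < i →
        (relevantWeyl n ℓ r * u * (relevantWeyl n ℓ r)⁻¹) i j = 0)
      ↔ (∀ a b : Fin n,
          ¬ (∃ i ∈ Finset.Icc 1 ℓ,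
              (n - rhat r i ≤ (a : ℕ) ∧ (a : ℕ) < n - rhat r (i - 1)) ∧
              (n - rhat r i ≤ (b : ℕ) ∧ (b : ℕ) < n - rhat r (i - 1))) →
          u a b = 0))
    ∧ ((∀ i j : Fin n, j < i →
          (relevantWeyl n ℓ r * u * (relevantWeyl n ℓ r)⁻¹) i j = 0) →
        ((∀ a b : Fin n,
            ¬ (∃ i ∈ Finset.Icc 1 ℓ,
                (rhat r (i - 1) ≤ (a : ℕ) ∧ (a : ℕ) < rhat r i) ∧
                (rhat r (i - 1) ≤ (b : ℕ) ∧ (b : ℕ) < rhat r i)) →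
            (relevantWeyl n ℓ r * u * (relevantWeyl n ℓ r)⁻¹) a b = 0)
          ∧ (∀ i : Fin n,
              (relevantWeyl n ℓ r * u * (relevantWeyl n ℓ r)⁻¹) i i = 1)
          ∧ (∀ i j : Fin n, j < i →
              (relevantWeyl n ℓ r * u * (relevantWeyl n ℓ r)⁻¹) i j = 0))) := by
  classical
  set w := relevantWeyl n ℓ r with hwdef
  have hσlt : ∀ a : Fin n, sfun n r (a : ℕ) < n := fun a => sfun_lt hsum a.isLt
  set f : Fin n → Fin n := fun a => ⟨sfun n r (a : ℕ), hσlt a⟩ with hfdef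
  have hfval : ∀ a : Fin n, (f a : ℕ) = sfun n r (a : ℕ) := fun a => rfl
  have hinj : Function.Injective f := by
    intro a b h
    exact Fin.ext (sfun_inj hsum a.isLt b.isLt (by
      have := congrArg Fin.val h
      simpa [hfdef] using this))
  have hsurj : Function.Surjective f := Finite.injective_iff_surjective.mp hinj
  have hw : ∀ a b : Fin n, w a b = if b = f a then 1 else 0 := by
    intro a b
    rw [hwdef, weyl_apply hsum]
    simp only [Fin.ext_iff, hfval]
  set w' : Matrix (Fin n) (Fin n) ℝ :=
    Matrix.of (fun a b => if a = f b then (1 : ℝ) else 0) with hw'def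
  have hmulw : ∀ (M : Matrix (Fin n) (Fin n) ℝ) (a b : Fin n),
      (w * M) a b = M (f a) b := by
    intro M a b
    rw [Matrix.mul_apply]
    simp [hw]
  have hmulw' : ∀ (M : Matrix (Fin n) (Fin n) ℝ) (a b : Fin n),
      (M * w') a b = M a (f b) := by
    intro M a b
    rw [Matrix.mul_apply]
    simp [hw'def]
  have hww' : w * w' = 1 := by
    ext a b
    rw [hmulw w' a b]
    simp [hw'def, Matrix.one_apply, hinj.eq_iff, eq_comm]
  have hinv : w⁻¹ = w' := Matrix.inv_eq_right_inv hww'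
  have hkey : ∀ a b : Fin n, (w * u * w⁻¹) a b = u (f a) (f b) := by
    intro a b
    rw [hinv, hmulw' (w * u) a b, hmulw u a (f b)]
  have hblk : ∀ a : Fin n, 1 ≤ bidx r (a : ℕ) ∧ bidx r (a : ℕ) ≤ ℓ ∧
      rhat r (bidx r (a : ℕ) - 1) ≤ (a : ℕ) ∧ (a : ℕ) < rhat r (bidx r (a : ℕ)) :=
    fun a => bidx_spec hsum a.isLt
  have hmir : ∀ a : Fin n, n - rhat r (bidx r (a : ℕ)) ≤ (f a : ℕ) ∧
      (f a : ℕ) < n - rhat r (bidx r (a : ℕ) - 1) := by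
    intro a
    rw [hfval]
    exact sfun_mirror hsum a.isLt
  have claim1 : ∀ x y : Fin n, bidx r (x : ℕ) < bidx r (y : ℕ) →
      (x : ℕ) < (y : ℕ) ∧ (f y : ℕ) < (f x : ℕ) := by
    intro x y h
    obtain ⟨hx1, hx2, hx3, hx4⟩ := hblk x
    obtain ⟨hy1, hy2, hy3, hy4⟩ := hblk y
    have m1 : rhat r (bidx r (x : ℕ)) ≤ rhat r (bidx r (y : ℕ) - 1) :=
      rhat_mono r (by omega)
    obtain ⟨mx1, mx2⟩ := hmir x
    obtain ⟨my1, my2⟩ := hmir y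
    have m2 : n - rhat r (bidx r (y : ℕ) - 1) ≤ n - rhat r (bidx r (x : ℕ)) :=
      Nat.sub_le_sub_left m1 n
    omega
  have claim2 : ∀ x y : Fin n, bidx r (x : ℕ) = bidx r (y : ℕ) →
      ((x : ℕ) < (y : ℕ) ↔ (f x : ℕ) < (f y : ℕ)) := by
    intro x y h
    obtain ⟨hx1, hx2, hx3, hx4⟩ := hblk x
    obtain ⟨hy1, hy2, hy3, hy4⟩ := hblk y
    have ex : (f x : ℕ) = (x : ℕ) - rhat r (bidx r (x : ℕ) - 1) +
        (n - rhat r (bidx r (x : ℕ))) := rfl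
    have ey : (f y : ℕ) = (y : ℕ) - rhat r (bidx r (y : ℕ) - 1) +
        (n - rhat r (bidx r (y : ℕ))) := rfl
    have h5 : rhat r (bidx r (y : ℕ)) ≤ n := le_trans (rhat_mono r hy2) (le_of_eq hsum)
    have h6 : rhat r (bidx r (y : ℕ) - 1) ≤ rhat r (bidx r (y : ℕ)) :=
      rhat_mono r (by omega)
    rw [h] at ex hx3 hx4
    omega
  constructor
  · constructor
    · intro hL a b hnot
      obtain ⟨x, rfl⟩ := hsurj a
      obtain ⟨y, rfl⟩ := hsurj b
      by_cases hxy : bidx r (x : ℕ) = bidx r (y : ℕ)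
      · refine absurd ⟨bidx r (x : ℕ), Finset.mem_Icc.mpr ⟨(hblk x).1, (hblk x).2.1⟩,
          hmir x, ?_⟩ hnot
        rw [hxy]; exact hmir y
      · rcases lt_or_gt_of_ne hxy with h | h
        · exact hu_upper _ _ (Fin.lt_def.mpr (claim1 x y h).2)
        · have hyx : y < x := Fin.lt_def.mpr (claim1 y x h).1
          have := hL x y hyx
          rwa [hkey] at this
    · intro hR i j hji
      rw [hkey]
      by_cases hij : bidx r (i : ℕ) = bidx r (j : ℕ)
      · exact hu_upper _ _ (Fin.lt_def.mpr ((claim2 j i hij.symm).mp (Fin.lt_def.mp hji)))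
      · apply hR
        rintro ⟨k, hk, hki, hkj⟩
        rw [Finset.mem_Icc] at hk
        have e1 : k = bidx r (i : ℕ) :=
          mirror_unique hk.1 (hblk i).1 hki.1 hki.2 (hmir i).1 (hmir i).2
        have e2 : k = bidx r (j : ℕ) :=
          mirror_unique hk.1 (hblk j).1 hkj.1 hkj.2 (hmir j).1 (hmir j).2
        exact hij (e1 ▸ e2)
  · intro hL
    refine ⟨?_, ?_, hL⟩
    · intro a b hnot
      rw [hkey]
      by_cases hab : bidx r (a : ℕ) = bidx r (b : ℕ)
      · refine absurd ⟨bidx r (a : ℕ), Finset.mem_Icc.mpr ⟨(hblk a).1, (hblk a).2.1⟩,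
          ⟨(hblk a).2.2.1, (hblk a).2.2.2⟩, ?_⟩ hnot
        rw [hab]; exact ⟨(hblk b).2.2.1, (hblk b).2.2.2⟩
      · rcases lt_or_gt_of_ne hab with h | h
        · exact hu_upper _ _ (Fin.lt_def.mpr (claim1 a b h).2)
        · have hba : b < a := Fin.lt_def.mpr (claim1 b a h).1
          have := hL a b hba
          rwa [hkey] at this
    · intro i
      rw [hkey]
      exact hu_diag _
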